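/- arXiv:1202.0504 — 2 statements merged into one kernel-verified Lean document; each statement's English description precedes it below -/
import Mathlib

section
/- Let P ⊆ ℝⁿ be a simple polygon with finitely many vertices and let p ∈ (0, 1). Then the global curvature energy of P is finite: U_p(P) < ∞. -/
open MeasureTheory Real
open scoped ENNReal NNReal Classical

/-- The Menger curvature of three points in `ℝⁿ`: the reciprocal of the circumradius,
`κ(x,y,z) = 2 dist(z, L_{x,y}) / (|x-z| |y-z|)` for pairwise distinct non-collinear points,
and `0` otherwise. -/
noncomputable def menger {n : ℕ} (x y z : EuclideanSpace ℝ (Fin n)) : ℝ :=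
  if x ≠ y ∧ y ≠ z ∧ x ≠ z ∧ ¬ Collinear ℝ ({x, y, z} : Set (EuclideanSpace ℝ (Fin n)))
  then 2 * Metric.infDist z (affineSpan ℝ ({x, y} : Set (EuclideanSpace ℝ (Fin n))) :
      Set (EuclideanSpace ℝ (Fin n))) / (dist x z * dist y z)
  else 0

/-- The point `(a, b) ∈ ℝ²` (with the Euclidean metric). -/
noncomputable def pt (a b : ℝ) : EuclideanSpace ℝ (Fin 2) :=
  (WithLp.equiv 2 (Fin 2 → ℝ)).symm ![a, b]

/-- Integral Menger curvature `M_p(X)` (innermost integration in `x`). -/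
noncomputable def Mp {n : ℕ} (p : ℝ) (X : Set (EuclideanSpace ℝ (Fin n))) : ℝ≥0∞ :=
  ∫⁻ z in X, ∫⁻ y in X, ∫⁻ x in X,
    (ENNReal.ofReal (menger x y z)) ^ p ∂μH[1] ∂μH[1] ∂μH[1]

/-- Intermediate energy `I_p(X)`. -/
noncomputable def Ip {n : ℕ} (p : ℝ) (X : Set (EuclideanSpace ℝ (Fin n))) : ℝ≥0∞ :=
  ∫⁻ y in X, ∫⁻ x in X,
    (⨆ z ∈ X, ENNReal.ofReal (menger x y z)) ^ p ∂μH[1] ∂μH[1]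

/-- Global curvature energy `U_p(X)`. -/
noncomputable def Up {n : ℕ} (p : ℝ) (X : Set (EuclideanSpace ℝ (Fin n))) : ℝ≥0∞ :=
  ∫⁻ x in X, (⨆ y ∈ X, ⨆ z ∈ X, ENNReal.ofReal (menger x y z)) ^ p ∂μH[1]

/-- `P ⊆ ℝⁿ` is a simple polygon with finitely many vertices: there are `N ≥ 3` vertices
`v 0, …, v (N-1)` (consecutive ones distinct) such that `P` is the union of the closed
segments `S i = [v i, v (i+1)]`, `i = 0, …, N-2`, consecutive segments meet exactly in their
common vertex, and non-adjacent segments are disjoint. -/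
def IsSimplePolygon {n : ℕ} (P : Set (EuclideanSpace ℝ (Fin n))) : Prop :=
  ∃ (N : ℕ) (v : ℕ → EuclideanSpace ℝ (Fin n)),
    3 ≤ N ∧
    (∀ i, i + 1 < N → v i ≠ v (i + 1)) ∧
    P = ⋃ i ∈ Finset.range (N - 1), segment ℝ (v i) (v (i + 1)) ∧
    (∀ i, i + 2 < N →
      segment ℝ (v i) (v (i + 1)) ∩ segment ℝ (v (i + 1)) (v (i + 2)) = {v (i + 1)}) ∧
    (∀ i j, i + 2 ≤ j → j + 1 < N →
      segment ℝ (v i) (v (i + 1)) ∩ segment ℝ (v j) (v (j + 1)) = ∅)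

/-!
Since `κ(x, y, z) ≤ 4 / |x - w|` for `w ∈ {y, z}`, and `κ` vanishes when `y` and `z` lie on the
line of the segment carrying `x`, the integrand of `U_p` at `x` is controlled by the distance from
`x` to the part of the polygon off that line. For two segments `S`, `T` there is a point `q ∈ S`
with `|x - w| ≳ |x - q|` for all `x ∈ S` and `w ∈ T` off the line of `S`: if `S` and `T` are
disjoint this is compactness, otherwise `q` is a common point and the two segments lie on two lines
through `q`. Hence the integrand is bounded on each segment by a finite sum of
`C |x - q|⁻ᵖ`, which is integrable along a segment through `q` because `p < 1`.
-/

open Set AffineMap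

theorem lintegral_Icc_zero_one_inv_rpow_lt_top {p : ℝ} (hp : p < 1) :
    ∫⁻ t in Icc (0 : ℝ) 1, (ENNReal.ofReal t)⁻¹ ^ p < ⊤ := by
  have hint : IntegrableOn (fun t : ℝ ↦ t ^ (-p)) (Ioo 0 1) :=
    (intervalIntegral.integrableOn_Ioo_rpow_iff one_pos).2 (by linarith)
  rw [setLIntegral_congr Ioo_ae_eq_Icc.symm]
  refine lt_of_eq_of_lt (setLIntegral_congr_fun measurableSet_Ioo fun t ht ↦ ?_)
    hint.setLIntegral_lt_top
  rw [← ENNReal.ofReal_inv_of_pos ht.1, ENNReal.ofReal_rpow_of_pos (inv_pos.2 ht.1),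
    Real.inv_rpow ht.1.le, Real.rpow_neg ht.1.le]

theorem lintegral_biUnion_finset_le {α ι : Type*} [MeasurableSpace α] {μ : Measure α}
    (s : Finset ι) (t : ι → Set α) (f : α → ℝ≥0∞) :
    ∫⁻ x in ⋃ i ∈ s, t i, f x ∂μ ≤ ∑ i ∈ s, ∫⁻ x in t i, f x ∂μ :=
  calc _ = ∫⁻ x in ⋃ i : s, t i, f x ∂μ := by rw [iUnion_subtype]
    _ ≤ ∑' i : s, ∫⁻ x in t i, f x ∂μ := lintegral_iUnion_le _ _
    _ = _ := Finset.tsum_subtype s fun i ↦ ∫⁻ x in t i, f x ∂μ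

section NormedSpace

variable {E : Type*} [NormedAddCommGroup E] [NormedSpace ℝ E]

theorem isCompact_segment (a b : E) : IsCompact (segment ℝ a b) := by
  rw [segment_eq_image_lineMap]
  exact isCompact_Icc.image lineMap_continuous

theorem mem_affineSpan_pair_of_mem_segment {x a b : E} (hx : x ∈ segment ℝ a b) :
    x ∈ line[ℝ, a, b] :=
  (mem_segment_iff_wbtw.1 hx).mem_affineSpan

theorem segment_subset_union_of_mem {a b q : E} (hq : q ∈ segment ℝ a b) :
    segment ℝ a b ⊆ segment ℝ q a ∪ segment ℝ q b := by
  intro x hx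
  rw [mem_segment_iff_wbtw] at hq hx
  have hray : SameRay ℝ (x -ᵥ a) (q -ᵥ a) :=
    hx.sameRay_vsub_left.trans hq.sameRay_vsub_left.symm fun h ↦ by
      rw [vsub_eq_zero_iff_eq] at h
      subst h
      exact Or.inl (vsub_eq_zero_iff_eq.2 ((wbtw_self_iff ℝ).1 hx))
  rcases wbtw_total_of_sameRay_vsub_left hray with h | h
  · exact Or.inl (segment_symm ℝ a q ▸ mem_segment_iff_wbtw.2 h)
  · exact Or.inr (mem_segment_iff_wbtw.2 (hx.trans_left_right h))

theorem exists_pos_mul_norm_le_norm_sub {K : Submodule ℝ E} (hK : IsClosed (K : Set E)) (B : E) :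
    ∃ κ : ℝ, 0 < κ ∧ ∀ u ∈ K, ∀ v ∈ ℝ ∙ B, v ∉ K → κ * ‖u‖ ≤ ‖u - v‖ := by
  by_cases hB : B ∈ K
  · exact ⟨1, one_pos, fun u _ v hv hvK ↦
      absurd ((Submodule.span_singleton_le_iff_mem _ _).2 hB hv) hvK⟩
  set δ := ‖K.mkQ B‖
  have hδ : 0 < δ := (norm_nonneg _).lt_of_ne' fun h ↦ hB <| by
    have := (QuotientAddGroup.norm_mk_eq_zero_iff_mem_closure (S := K.toAddSubgroup)).1 h
    rwa [Submodule.coe_toAddSubgroup, hK.closure_eq] at this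
  refine ⟨δ / (δ + ‖B‖), by positivity, fun u hu v hv _ ↦ ?_⟩
  obtain ⟨t, rfl⟩ := Submodule.mem_span_singleton.1 hv
  have hproj : |t| * δ ≤ ‖u - t • B‖ :=
    calc |t| * δ = ‖K.mkQ (u - t • B)‖ := by
          rw [map_sub, Submodule.mkQ_apply, (Submodule.Quotient.mk_eq_zero K).2 hu, map_smul,
            zero_sub, norm_neg, norm_smul, Real.norm_eq_abs]
      _ ≤ ‖u - t • B‖ := Submodule.Quotient.norm_mk_le _ _
  have htri : ‖u‖ ≤ ‖u - t • B‖ + |t| * ‖B‖ := by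
    simpa [norm_smul] using norm_le_norm_sub_add u (t • B)
  rw [div_mul_eq_mul_div, div_le_iff₀ (by positivity)]
  nlinarith [abs_nonneg t, norm_nonneg B, norm_nonneg (u - t • B)]

theorem exists_mem_segment_forall_mul_dist_le (a b c d : E) :
    ∃ q ∈ segment ℝ a b, ∃ κ : ℝ, 0 < κ ∧ ∀ x ∈ segment ℝ a b, ∀ w ∈ segment ℝ c d,
      w ∉ line[ℝ, a, b] → κ * dist x q ≤ dist x w := by
  rcases (segment ℝ a b ∩ segment ℝ c d).eq_empty_or_nonempty with hST | ⟨q, hqS, hqT⟩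
  · obtain ⟨r, hr, hrS⟩ := Metric.exists_pos_forall_lt_edist (isCompact_segment a b)
      (isCompact_segment c d).isClosed (disjoint_iff_inter_eq_empty.2 hST)
    refine ⟨a, left_mem_segment ℝ a b, r / (dist a b + 1), by positivity,
      fun x hx w hw _ ↦ ?_⟩
    have hxa : dist x a ≤ dist a b := by
      rw [dist_comm, ← dist_add_dist_of_mem_segment hx]
      exact le_add_of_nonneg_right dist_nonneg
    have hrw : (r : ℝ) < dist x w := by
      have := hrS x hx w hw
      rwa [edist_nndist, ENNReal.coe_lt_coe, ← NNReal.coe_lt_coe, coe_nndist] at this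
    calc r / (dist a b + 1) * dist x a ≤ r / (dist a b + 1) * (dist a b + 1) := by
          gcongr; linarith
      _ = r := div_mul_cancel₀ _ (by positivity)
      _ ≤ dist x w := hrw.le
  · have hclosed : IsClosed ((line[ℝ, a, b]).direction : Set E) :=
      Submodule.closed_of_finiteDimensional _
    obtain ⟨κ, hκ, hK⟩ := exists_pos_mul_norm_le_norm_sub hclosed (c -ᵥ d)
    refine ⟨q, hqS, κ, hκ, fun x hx w hw hwL ↦ ?_⟩
    have hqL := mem_affineSpan_pair_of_mem_segment hqS
    have hxq := AffineSubspace.vsub_mem_direction (mem_affineSpan_pair_of_mem_segment hx) hqL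
    have hwq : w -ᵥ q ∈ ℝ ∙ (c -ᵥ d) := by
      rw [← vectorSpan_pair, ← direction_affineSpan]
      exact AffineSubspace.vsub_mem_direction (mem_affineSpan_pair_of_mem_segment hw)
        (mem_affineSpan_pair_of_mem_segment hqT)
    have h := hK (x -ᵥ q) hxq (w -ᵥ q) hwq
      (by rwa [AffineSubspace.vsub_right_mem_direction_iff_mem hqL])
    simpa [dist_eq_norm] using h

theorem exists_mem_segment_forall_inv_edist_le (a b c d : E) :
    ∃ q ∈ segment ℝ a b, ∃ C : ℝ≥0∞, C ≠ ⊤ ∧ ∀ x ∈ segment ℝ a b, ∀ w ∈ segment ℝ c d,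
      w ∉ line[ℝ, a, b] → (edist x w)⁻¹ ≤ C * (edist x q)⁻¹ := by
  obtain ⟨q, hq, κ, hκ, h⟩ := exists_mem_segment_forall_mul_dist_le a b c d
  refine ⟨q, hq, ENNReal.ofReal κ⁻¹, ENNReal.ofReal_ne_top, fun x hx w hw hwL ↦ ?_⟩
  rw [ENNReal.ofReal_inv_of_pos hκ, ← ENNReal.mul_inv (Or.inl (by simpa using hκ))
    (Or.inl ENNReal.ofReal_ne_top), edist_dist, edist_dist, ← ENNReal.ofReal_mul hκ.le]
  exact ENNReal.inv_le_inv.2 (ENNReal.ofReal_le_ofReal (h x hx w hw hwL))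

variable [MeasurableSpace E] [BorelSpace E]

theorem restrict_hausdorffMeasure_lineMap_image (x y : E) (s : Set ℝ) :
    (μH[1] : Measure E).restrict (lineMap x y '' s) =
      nndist x y • (volume.restrict s).map (lineMap x y) := by
  have hf : Measurable (lineMap x y : ℝ → E) := (lineMap_continuous (R := ℝ)).measurable
  ext B hB
  rw [Measure.restrict_apply hB, Measure.smul_apply, Measure.map_apply hf hB,
    Measure.restrict_apply (hf hB), inter_comm, ← image_inter_preimage,
    hausdorffMeasure_lineMap_image, hausdorffMeasure_real, inter_comm]

theorem lintegral_segment_rpow_mul_inv_edist_left_lt_top (q a : E) {C : ℝ≥0∞} (hC : C ≠ ⊤)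
    {p : ℝ} (hp0 : 0 ≤ p) (hp1 : p < 1) :
    ∫⁻ x in segment ℝ q a, (C * (edist x q)⁻¹) ^ p ∂μH[1] < ⊤ := by
  rcases eq_or_ne q a with rfl | hqa
  · have := Measure.nullSingletonClass_hausdorff E one_pos
    simp [segment_same, Measure.restrict_singleton]
  have hd : edist q a ≠ 0 := (edist_pos.2 hqa).ne'
  have hpoint : ∀ t ∈ Icc (0 : ℝ) 1, (C * (edist (lineMap q a t) q)⁻¹) ^ p =
      (C * (edist q a)⁻¹) ^ p * (ENNReal.ofReal t)⁻¹ ^ p := fun t ht ↦ by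
    rw [edist_dist, dist_lineMap_left, Real.norm_of_nonneg ht.1, ENNReal.ofReal_mul ht.1,
      ← edist_dist, ENNReal.mul_inv (Or.inr (edist_ne_top _ _)) (Or.inr hd),
      ← ENNReal.mul_rpow_of_nonneg _ _ hp0, mul_comm (ENNReal.ofReal t)⁻¹, mul_assoc]
  rw [segment_eq_image_lineMap, restrict_hausdorffMeasure_lineMap_image,
    lintegral_smul_measure, lintegral_map (by fun_prop) (lineMap_continuous (R := ℝ)).measurable,
    setLIntegral_congr_fun measurableSet_Icc hpoint, lintegral_const_mul' _ _ (by finiteness)]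
  exact ENNReal.mul_lt_top ENNReal.coe_lt_top
    (ENNReal.mul_lt_top (by finiteness) (lintegral_Icc_zero_one_inv_rpow_lt_top hp1))

theorem lintegral_segment_rpow_mul_inv_edist_lt_top {a b q : E} (hq : q ∈ segment ℝ a b)
    {C : ℝ≥0∞} (hC : C ≠ ⊤) {p : ℝ} (hp0 : 0 ≤ p) (hp1 : p < 1) :
    ∫⁻ x in segment ℝ a b, (C * (edist x q)⁻¹) ^ p ∂μH[1] < ⊤ :=
  calc _ ≤ ∫⁻ x in segment ℝ q a ∪ segment ℝ q b, (C * (edist x q)⁻¹) ^ p ∂μH[1] :=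
        lintegral_mono_set (segment_subset_union_of_mem hq)
    _ ≤ _ := lintegral_union_le _ _ _
    _ < ⊤ := ENNReal.add_lt_top.2
        ⟨lintegral_segment_rpow_mul_inv_edist_left_lt_top q a hC hp0 hp1,
          lintegral_segment_rpow_mul_inv_edist_left_lt_top q b hC hp0 hp1⟩

end NormedSpace

section Menger

variable {n : ℕ}

theorem menger_eq_zero_of_collinear {x y z : EuclideanSpace ℝ (Fin n)}
    (h : Collinear ℝ ({x, y, z} : Set (EuclideanSpace ℝ (Fin n)))) : menger x y z = 0 := by
  simp [menger, h]

theorem menger_le_four_div_dist {x y z w : EuclideanSpace ℝ (Fin n)} (hw : w = y ∨ w = z) :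
    menger x y z ≤ 4 / dist x w := by
  unfold menger
  split_ifs with h
  swap
  · positivity
  obtain ⟨hxy, hyz, hxz, -⟩ := h
  set d := Metric.infDist z (line[ℝ, x, y] : Set (EuclideanSpace ℝ (Fin n)))
  have hd0 : 0 ≤ d := Metric.infDist_nonneg
  have hdx : d ≤ dist x z :=
    dist_comm z x ▸ Metric.infDist_le_dist_of_mem (left_mem_affineSpan_pair ℝ x y)
  have hdy : d ≤ dist y z :=
    dist_comm z y ▸ Metric.infDist_le_dist_of_mem (right_mem_affineSpan_pair ℝ x y)
  have hxz' := dist_pos.2 hxz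
  have hyz' := dist_pos.2 hyz
  rcases hw with rfl | rfl
  · have htri : dist x w ≤ dist x z + dist w z := dist_triangle_right x w z
    rw [div_le_div_iff₀ (by positivity) (dist_pos.2 hxy)]
    nlinarith [mul_le_mul_of_nonneg_left htri hd0]
  · rw [div_le_div_iff₀ (by positivity) hxz']
    nlinarith

theorem ofReal_menger_le_four_mul_inv_edist {x y z w : EuclideanSpace ℝ (Fin n)}
    (hw : w = y ∨ w = z) : ENNReal.ofReal (menger x y z) ≤ 4 * (edist x w)⁻¹ := by
  rcases eq_or_ne x w with rfl | hxw
  · simp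
  have hd := dist_pos.2 hxw
  rw [edist_dist, ← ENNReal.ofReal_inv_of_pos hd, ← ENNReal.ofReal_ofNat 4,
    ← ENNReal.ofReal_mul (by norm_num), ← div_eq_mul_inv]
  exact ENNReal.ofReal_le_ofReal (menger_le_four_div_dist hw)

theorem iSup_menger_rpow_le {X : Set (EuclideanSpace ℝ (Fin n))}
    {x a b : EuclideanSpace ℝ (Fin n)} (hx : x ∈ line[ℝ, a, b]) {p : ℝ} (hp : 0 < p)
    {B : ℝ≥0∞} (hB : ∀ w ∈ X, w ∉ line[ℝ, a, b] → (4 * (edist x w)⁻¹) ^ p ≤ B) :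
    (⨆ y ∈ X, ⨆ z ∈ X, ENNReal.ofReal (menger x y z)) ^ p ≤ B := by
  rw [← ENNReal.le_rpow_inv_iff hp]
  refine iSup₂_le fun y hy ↦ iSup₂_le fun z hz ↦ ?_
  rw [ENNReal.le_rpow_inv_iff hp]
  by_cases hyL : y ∈ line[ℝ, a, b]
  · by_cases hzL : z ∈ line[ℝ, a, b]
    · rw [menger_eq_zero_of_collinear (collinear_triple_of_mem_affineSpan_pair hx hyL hzL),
        ENNReal.ofReal_zero, ENNReal.zero_rpow_of_pos hp]
      exact zero_le
    · exact (ENNReal.rpow_le_rpow (ofReal_menger_le_four_mul_inv_edist (Or.inr rfl)) hp.le).trans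
        (hB z hz hzL)
  · exact (ENNReal.rpow_le_rpow (ofReal_menger_le_four_mul_inv_edist (Or.inl rfl)) hp.le).trans
      (hB y hy hyL)

theorem Up_biUnion_segment_lt_top {ι : Type*} (s : Finset ι)
    (a b : ι → EuclideanSpace ℝ (Fin n)) {p : ℝ} (hp0 : 0 < p) (hp1 : p < 1) :
    Up p (⋃ i ∈ s, segment ℝ (a i) (b i)) < ⊤ := by
  set P := ⋃ i ∈ s, segment ℝ (a i) (b i)
  choose q hq C hC hqC using
    fun i j ↦ exists_mem_segment_forall_inv_edist_le (a i) (b i) (a j) (b j)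
  set F : ι → EuclideanSpace ℝ (Fin n) → ℝ≥0∞ :=
    fun i x ↦ ∑ j ∈ s, (4 * C i j * (edist x (q i j))⁻¹) ^ p
  have hbound : ∀ i ∈ s, ∀ x ∈ segment ℝ (a i) (b i),
      (⨆ y ∈ P, ⨆ z ∈ P, ENNReal.ofReal (menger x y z)) ^ p ≤ F i x := by
    intro i _ x hx
    refine iSup_menger_rpow_le (mem_affineSpan_pair_of_mem_segment hx) hp0 fun w hw hwL ↦ ?_
    obtain ⟨j, hj, hwj⟩ := mem_iUnion₂.1 hw
    calc (4 * (edist x w)⁻¹) ^ p ≤ (4 * C i j * (edist x (q i j))⁻¹) ^ p := by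
          rw [mul_assoc]; gcongr; exact hqC i j x hx w hwj hwL
      _ ≤ F i x := Finset.single_le_sum (f := fun j ↦ (4 * C i j * (edist x (q i j))⁻¹) ^ p)
          (fun _ _ ↦ zero_le) hj
  calc Up p P ≤ ∑ i ∈ s, ∫⁻ x in segment ℝ (a i) (b i),
        (⨆ y ∈ P, ⨆ z ∈ P, ENNReal.ofReal (menger x y z)) ^ p ∂μH[1] :=
        lintegral_biUnion_finset_le _ _ _
    _ ≤ ∑ i ∈ s, ∫⁻ x in segment ℝ (a i) (b i), F i x ∂μH[1] :=
        Finset.sum_le_sum fun i hi ↦ setLIntegral_mono (by fun_prop) (hbound i hi)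
    _ = ∑ i ∈ s, ∑ j ∈ s, ∫⁻ x in segment ℝ (a i) (b i),
        (4 * C i j * (edist x (q i j))⁻¹) ^ p ∂μH[1] :=
        Finset.sum_congr rfl fun i _ ↦ lintegral_finsetSum _ fun j _ ↦ by fun_prop
    _ < ⊤ := ENNReal.sum_lt_top.2 fun i _ ↦ ENNReal.sum_lt_top.2 fun j _ ↦
        lintegral_segment_rpow_mul_inv_edist_lt_top (hq i j) (by finiteness [hC i j]) hp0.le hp1

end Menger

/-- Every simple polygon has finite global curvature energy for `p ∈ (0,1)`. -/
theorem Up_lt_top_of_isSimplePolygon {n : ℕ} (P : Set (EuclideanSpace ℝ (Fin n)))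
    (hP : IsSimplePolygon P) (p : ℝ) (hp : p ∈ Set.Ioo (0:ℝ) 1) :
    Up p P < ⊤ := by
  obtain ⟨N, v, -, -, rfl, -, -⟩ := hP
  exact Up_biUnion_segment_lt_top _ _ _ hp.1 hp.2
end

section
/- Let P ⊆ ℝⁿ be a simple polygon with finitely many vertices whose vertices are not all collinear (i.e., P is not contained in a straight line), and let p ≥ 2. Then the intermediate energy of P is infinite: I_p(P) = ∞. -/
/-!
At a corner `w` of the polygon, where two non-collinear edges meet, put `x = s • a + w` and
`y = t • b + w` on the two edges, with `a`, `b` unit directions. Since `a` and `b` are linearly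
independent, every point of the line through `x` and `y` is at distance `≳ s t / (s + t)` from
`w`, so `κ(x, y, w) ≳ 1 / (s + t)`. Choosing `z = w` in the supremum, the integrand of `I_p` is
`≳ (s + t)⁻ᵖ ≥ (s + t)⁻²` near the corner, and `∫₀^δ ∫₀^δ (s + t)⁻² ds dt` diverges like
`∫₀^δ dt / t`.
-/

open MeasureTheory Real
open scoped ENNReal NNReal Classical

lemma lintegral_Ioc_ofReal_inv_eq_top {δ : ℝ} (hδ : 0 < δ) :
    ∫⁻ t in Set.Ioc 0 δ, ENNReal.ofReal t⁻¹ = ∞ := by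
  by_contra h
  have hint : IntegrableOn (fun t : ℝ => t⁻¹) (Set.Ioc 0 δ) :=
    (lintegral_ofReal_ne_top_iff_integrable (by fun_prop)
      ((ae_restrict_iff' measurableSet_Ioc).2 (.of_forall fun t ht => inv_nonneg.2 ht.1.le))).1 h
  rcases intervalIntegrable_inv_iff.1
    ((intervalIntegrable_iff_integrableOn_Ioc_of_le hδ.le).2 hint) with h0 | h0
  · exact hδ.ne h0
  · exact h0 Set.left_mem_uIcc

lemma lintegral_lintegral_Ioc_rpow_div_add_eq_top {c δ p : ℝ} (hδ : 0 < δ) (hδc : 2 * δ ≤ c)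
    (hp : 2 ≤ p) :
    ∫⁻ t in Set.Ioc 0 δ, ∫⁻ s in Set.Ioc 0 δ, ENNReal.ofReal (c / (s + t)) ^ p = ∞ := by
  have hc : 0 < c := by linarith
  have hinner : ∀ t ∈ Set.Ioc 0 δ, ENNReal.ofReal (c ^ 2 / 4) * ENNReal.ofReal t⁻¹ ≤
      ∫⁻ s in Set.Ioc 0 δ, ENNReal.ofReal (c / (s + t)) ^ p := by
    rintro t ⟨ht, htδ⟩
    -- for `s ≤ t` the integrand is at least `(c / (2 t))²`; integrate over `s ∈ (0, t]`
    have hone : 1 ≤ ENNReal.ofReal (c / (2 * t)) :=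
      ENNReal.one_le_ofReal.2 ((one_le_div (by positivity)).2 (by linarith))
    calc ENNReal.ofReal (c ^ 2 / 4) * ENNReal.ofReal t⁻¹
        = ENNReal.ofReal (c / (2 * t)) ^ (2 : ℝ) * volume (Set.Ioc 0 t) := by
          rw [Real.volume_Ioc, sub_zero, ENNReal.rpow_two, ← ENNReal.ofReal_pow (by positivity),
            ← ENNReal.ofReal_mul (by positivity), ← ENNReal.ofReal_mul (by positivity)]
          congr 1
          field_simp
          ring
      _ = ∫⁻ _ in Set.Ioc 0 t, ENNReal.ofReal (c / (2 * t)) ^ (2 : ℝ) :=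
          (setLIntegral_const _ _).symm
      _ ≤ ∫⁻ s in Set.Ioc 0 t, ENNReal.ofReal (c / (s + t)) ^ p := by
          refine setLIntegral_mono' measurableSet_Ioc fun s hs => ?_
          refine (ENNReal.rpow_le_rpow_of_exponent_le hone hp).trans
            (ENNReal.rpow_le_rpow (ENNReal.ofReal_le_ofReal ?_) (by linarith))
          exact div_le_div_of_nonneg_left (by linarith) (by linarith [hs.1]) (by linarith [hs.2])
      _ ≤ ∫⁻ s in Set.Ioc 0 δ, ENNReal.ofReal (c / (s + t)) ^ p :=
          lintegral_mono_set (Set.Ioc_subset_Ioc_right htδ)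
  refine top_le_iff.1 ?_
  calc ∞ = ENNReal.ofReal (c ^ 2 / 4) * ∫⁻ t in Set.Ioc 0 δ, ENNReal.ofReal t⁻¹ := by
        rw [lintegral_Ioc_ofReal_inv_eq_top hδ, ENNReal.mul_top]
        exact ENNReal.ofReal_ne_zero_iff.2 (by positivity)
    _ = ∫⁻ t in Set.Ioc 0 δ, ENNReal.ofReal (c ^ 2 / 4) * ENNReal.ofReal t⁻¹ :=
        (lintegral_const_mul _ (by fun_prop)).symm
    _ ≤ _ := setLIntegral_mono' measurableSet_Ioc hinner

lemma Isometry.setLIntegral_image_hausdorffMeasure {X : Type*} [MetricSpace X] [MeasurableSpace X]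
    [BorelSpace X] {f : ℝ → X} (hf : Isometry f) (g : X → ℝ≥0∞) {A : Set ℝ}
    (hA : MeasurableSet A) :
    ∫⁻ x in f '' A, g x ∂μH[1] = ∫⁻ s in A, g (f s) := by
  have hemb : MeasurableEmbedding f := hf.isClosedEmbedding.measurableEmbedding
  have hmap := hemb.restrict_map (μ := volume) (f '' A)
  rw [hemb.injective.preimage_image, ← hausdorffMeasure_real,
    hf.map_hausdorffMeasure (.inl zero_le_one), Measure.restrict_restrict
    (hemb.measurableSet_image.2 hA), Set.inter_eq_self_of_subset_left (Set.image_subset_range f A)]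
    at hmap
  rw [hmap, hemb.lintegral_map, hausdorffMeasure_real]

lemma isometry_smul_add {E : Type*} [NormedAddCommGroup E] [NormedSpace ℝ E] {a : E}
    (ha : ‖a‖ = 1) (w : E) : Isometry fun s : ℝ => s • a + w :=
  Isometry.of_dist_eq fun s t => by
    rw [dist_add_right, dist_eq_norm, ← sub_smul, norm_smul, ha, mul_one, Real.dist_eq,
      Real.norm_eq_abs]

lemma smul_inv_norm_smul_add_mem_segment {E : Type*} [NormedAddCommGroup E] [NormedSpace ℝ E]
    {w x : E} {s : ℝ} (hs : 0 ≤ s) (hsx : s ≤ ‖x - w‖) :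
    s • (‖x - w‖⁻¹ • (x - w)) + w ∈ segment ℝ w x := by
  rw [segment_eq_image_lineMap]
  refine ⟨s / ‖x - w‖, ⟨by positivity, div_le_one_of_le₀ hsx (norm_nonneg _)⟩, ?_⟩
  rw [AffineMap.lineMap_apply, smul_smul, div_eq_mul_inv, vsub_eq_sub, vadd_eq_add]

lemma linearIndependent_vsub_of_not_collinear {k V P : Type*} [Field k] [AddCommGroup V]
    [Module k V] [AddTorsor V P] {x w y : P} (h : ¬ Collinear k ({x, w, y} : Set P)) :
    LinearIndependent k ![x -ᵥ w, y -ᵥ w] := by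
  rw [LinearIndependent.pair_iff]
  intro α β hαβ
  by_contra hne
  apply h
  rcases not_and_or.1 hne with hα | hβ
  · have hx : x = (-(β / α)) • (y -ᵥ w) +ᵥ w := by
      rw [eq_vadd_iff_vsub_eq, neg_smul, div_eq_inv_mul, mul_smul, ← smul_neg,
        eq_inv_smul_iff₀ hα, ← add_eq_zero_iff_eq_neg, hαβ]
    rw [hx]
    exact collinear_insert_of_mem_affineSpan_pair (smul_vsub_vadd_mem_affineSpan_pair _ _ _)
  · have hy : y = (-(α / β)) • (x -ᵥ w) +ᵥ w := by
      rw [eq_vadd_iff_vsub_eq, neg_smul, div_eq_inv_mul, mul_smul, ← smul_neg,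
        eq_inv_smul_iff₀ hβ, ← add_eq_zero_iff_eq_neg, add_comm, hαβ]
    have hswap : ({x, w, y} : Set P) = {y, w, x} := by
      ext; simp only [Set.mem_insert_iff, Set.mem_singleton_iff]; tauto
    rw [hswap, hy]
    exact collinear_insert_of_mem_affineSpan_pair (smul_vsub_vadd_mem_affineSpan_pair _ _ _)

lemma LinearIndependent.exists_mul_max_abs_le_norm {E : Type*} [NormedAddCommGroup E]
    [NormedSpace ℝ E] {a b : E} (h : LinearIndependent ℝ ![a, b]) :
    ∃ c > 0, ∀ α β : ℝ, c * max |α| |β| ≤ ‖α • a + β • b‖ := by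
  let L : ℝ × ℝ →ₗ[ℝ] E := (LinearMap.fst ℝ ℝ ℝ).smulRight a + (LinearMap.snd ℝ ℝ ℝ).smulRight b
  have hker : LinearMap.ker L = ⊥ := LinearMap.ker_eq_bot'.2 fun ⟨α, β⟩ hL => by
    obtain ⟨rfl, rfl⟩ := LinearIndependent.pair_iff.1 h α β hL
    rfl
  obtain ⟨K, -, hK⟩ := L.exists_antilipschitzWith hker
  obtain ⟨c, hc, hcL⟩ := antilipschitzWith_iff_exists_mul_le_norm.1 ⟨K, hK⟩
  exact ⟨c, hc, fun α β => by simpa [L, Prod.norm_def] using hcL (α, β)⟩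

lemma mul_div_add_le_max_abs {s t : ℝ} (hs : 0 < s) (ht : 0 < t) (r : ℝ) :
    s * t / (s + t) ≤ max |(1 - r) * s| |r * t| := by
  rw [div_le_iff₀ (by positivity), abs_mul, abs_mul, abs_of_pos hs, abs_of_pos ht]
  have h1 : |1 - r| * s ≤ max (|1 - r| * s) (|r| * t) := le_max_left _ _
  have h2 : |r| * t ≤ max (|1 - r| * s) (|r| * t) := le_max_right _ _
  have h3 : 1 ≤ |1 - r| + |r| := by simpa using abs_add_le (1 - r) r
  nlinarith [mul_le_mul_of_nonneg_right h1 ht.le, mul_le_mul_of_nonneg_right h2 hs.le,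
    mul_le_mul_of_nonneg_left h3 (mul_pos hs ht).le]

lemma le_infDist_affineSpan_smul_add {E : Type*} [NormedAddCommGroup E] [NormedSpace ℝ E]
    {a b w : E} {c s t : ℝ} (hc : 0 ≤ c) (hC : ∀ α β : ℝ, c * max |α| |β| ≤ ‖α • a + β • b‖)
    (hs : 0 < s) (ht : 0 < t) :
    c * (s * t / (s + t)) ≤ Metric.infDist w (line[ℝ, s • a + w, t • b + w] : Set E) := by
  refine (Metric.le_infDist ⟨_, left_mem_affineSpan_pair ℝ _ _⟩).2 fun q hq => ?_
  obtain ⟨r, rfl⟩ := mem_affineSpan_pair_iff_exists_lineMap_eq.1 hq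
  have hq : AffineMap.lineMap (s • a + w) (t • b + w) r - w = ((1 - r) * s) • a + (r * t) • b := by
    rw [AffineMap.lineMap_apply, vsub_eq_sub, vadd_eq_add]
    module
  calc c * (s * t / (s + t)) ≤ c * max |(1 - r) * s| |r * t| :=
        mul_le_mul_of_nonneg_left (mul_div_add_le_max_abs hs ht r) hc
    _ ≤ _ := hC _ _
    _ = _ := by rw [dist_comm, dist_eq_norm, hq]

lemma menger_eq_of_infDist_pos {n : ℕ} {x y z : EuclideanSpace ℝ (Fin n)} (hxy : x ≠ y)
    (hz : 0 < Metric.infDist z (line[ℝ, x, y] : Set (EuclideanSpace ℝ (Fin n)))) :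
    menger x y z =
      2 * Metric.infDist z (line[ℝ, x, y] : Set (EuclideanSpace ℝ (Fin n))) /
        (dist x z * dist y z) := by
  have hz' : z ∉ line[ℝ, x, y] := fun hmem => hz.ne' (Metric.infDist_zero_of_mem hmem)
  refine if_pos ⟨hxy, ?_, ?_, fun hcol => hz' ?_⟩
  · rintro rfl
    exact hz' (right_mem_affineSpan_pair ℝ x _)
  · rintro rfl
    exact hz' (left_mem_affineSpan_pair ℝ _ y)
  · exact hcol.mem_affineSpan_of_mem_of_ne (by simp) (by simp) (by simp) hxy

lemma dist_smul_add_self {E : Type*} [NormedAddCommGroup E] [NormedSpace ℝ E] {a : E}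
    (ha : ‖a‖ = 1) (s : ℝ) (w : E) : dist (s • a + w) w = |s| := by
  rw [dist_add_self_left, norm_smul, ha, mul_one, Real.norm_eq_abs]

lemma two_mul_div_add_le_menger {n : ℕ} {a b w : EuclideanSpace ℝ (Fin n)} {c s t : ℝ}
    (ha : ‖a‖ = 1) (hb : ‖b‖ = 1) (hc : 0 < c)
    (hC : ∀ α β : ℝ, c * max |α| |β| ≤ ‖α • a + β • b‖) (hs : 0 < s) (ht : 0 < t) :
    2 * c / (s + t) ≤ menger (s • a + w) (t • b + w) w := by
  have hinf := le_infDist_affineSpan_smul_add (w := w) hc.le hC hs ht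
  have hxy : s • a + w ≠ t • b + w := by
    intro h
    have hzero : s • a + (-t) • b = 0 :=
      calc s • a + (-t) • b = (s • a + w) - (t • b + w) := by module
        _ = 0 := by rw [h, sub_self]
    have := hC s (-t)
    rw [hzero, norm_zero, abs_neg, abs_of_pos hs, abs_of_pos ht] at this
    nlinarith [lt_max_of_lt_left (c := t) hs]
  rw [menger_eq_of_infDist_pos hxy (lt_of_lt_of_le (by positivity) hinf),
    dist_smul_add_self ha, dist_smul_add_self hb, abs_of_pos hs, abs_of_pos ht]
  calc 2 * c / (s + t) = 2 * (c * (s * t / (s + t))) / (s * t) := by field_simp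
    _ ≤ _ := by gcongr

lemma lintegral_lintegral_le_Ip {n : ℕ} {X : Set (EuclideanSpace ℝ (Fin n))}
    {f g : ℝ → EuclideanSpace ℝ (Fin n)} (hf : Isometry f) (hg : Isometry g) {A B : Set ℝ}
    (hA : MeasurableSet A) (hB : MeasurableSet B) (hfA : f '' A ⊆ X) (hgB : g '' B ⊆ X)
    (p : ℝ) :
    ∫⁻ t in B, ∫⁻ s in A, (⨆ z ∈ X, ENNReal.ofReal (menger (f s) (g t) z)) ^ p ≤ Ip p X := by
  calc ∫⁻ t in B, ∫⁻ s in A, (⨆ z ∈ X, ENNReal.ofReal (menger (f s) (g t) z)) ^ p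
      = ∫⁻ y in g '' B, ∫⁻ x in f '' A, (⨆ z ∈ X, ENNReal.ofReal (menger x y z)) ^ p
          ∂μH[1] ∂μH[1] := by
        rw [hg.setLIntegral_image_hausdorffMeasure _ hB]
        exact lintegral_congr fun t => (hf.setLIntegral_image_hausdorffMeasure
          (fun x => (⨆ z ∈ X, ENNReal.ofReal (menger x (g t) z)) ^ p) hA).symm
    _ ≤ Ip p X := (lintegral_mono fun _ => lintegral_mono_set hfA).trans (lintegral_mono_set hgB)

lemma Ip_eq_top_of_segment_subset {n : ℕ} {X : Set (EuclideanSpace ℝ (Fin n))}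
    {x w y : EuclideanSpace ℝ (Fin n)} (hxwy : ¬ Collinear ℝ {x, w, y})
    (hx : segment ℝ w x ⊆ X) (hy : segment ℝ w y ⊆ X) {p : ℝ} (hp : 2 ≤ p) :
    Ip p X = ∞ := by
  have hxw : x - w ≠ 0 := sub_ne_zero.2 fun h => hxwy (by simp [h, collinear_pair])
  have hyw : y - w ≠ 0 := sub_ne_zero.2 fun h => hxwy (by simp [h, collinear_pair])
  set a := ‖x - w‖⁻¹ • (x - w)
  set b := ‖y - w‖⁻¹ • (y - w)
  have ha : ‖a‖ = 1 := norm_smul_inv_norm hxw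
  have hb : ‖b‖ = 1 := norm_smul_inv_norm hyw
  have hab : LinearIndependent ℝ ![a, b] := by
    have hli : LinearIndependent ℝ ![x - w, y - w] := by
      simpa only [vsub_eq_sub] using linearIndependent_vsub_of_not_collinear hxwy
    exact (LinearIndependent.pair_smul_smul_iff (inv_ne_zero (norm_ne_zero_iff.2 hxw)).isUnit
      (inv_ne_zero (norm_ne_zero_iff.2 hyw)).isUnit).2 hli
  obtain ⟨c, hc, hC⟩ := hab.exists_mul_max_abs_le_norm
  set δ := min (min ‖x - w‖ ‖y - w‖) c
  have hδ : 0 < δ := lt_min (lt_min (norm_pos_iff.2 hxw) (norm_pos_iff.2 hyw)) hc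
  have hδc : δ ≤ c := min_le_right _ _
  have hfX : (fun s : ℝ => s • a + w) '' Set.Ioc 0 δ ⊆ X := by
    rintro _ ⟨s, hs, rfl⟩
    exact hx (smul_inv_norm_smul_add_mem_segment hs.1.le
      (hs.2.trans ((min_le_left _ _).trans (min_le_left _ _))))
  have hgX : (fun t : ℝ => t • b + w) '' Set.Ioc 0 δ ⊆ X := by
    rintro _ ⟨t, ht, rfl⟩
    exact hy (smul_inv_norm_smul_add_mem_segment ht.1.le
      (ht.2.trans ((min_le_left _ _).trans (min_le_right _ _))))
  have hwX : w ∈ X := hx (left_mem_segment ℝ w x)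
  refine top_le_iff.1 (le_trans ?_ (lintegral_lintegral_le_Ip (isometry_smul_add ha w)
    (isometry_smul_add hb w) measurableSet_Ioc measurableSet_Ioc hfX hgX p))
  rw [← lintegral_lintegral_Ioc_rpow_div_add_eq_top hδ (by linarith : 2 * δ ≤ 2 * c) hp]
  refine setLIntegral_mono' measurableSet_Ioc fun t ht => setLIntegral_mono' measurableSet_Ioc
    fun s hs => ENNReal.rpow_le_rpow ?_ (by linarith)
  exact (ENNReal.ofReal_le_ofReal (two_mul_div_add_le_menger ha hb hc hC hs.1 ht.1)).trans
    (le_biSup (fun z => ENNReal.ofReal (menger (s • a + w) (t • b + w) z)) hwX)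

lemma collinear_affineSpan_pair {k V P : Type*} [Field k] [AddCommGroup V] [Module k V]
    [AddTorsor V P] (p q : P) : Collinear k (line[k, p, q] : Set P) := by
  rw [Collinear, ← AffineSubspace.direction_eq_vectorSpan, direction_affineSpan]
  exact collinear_pair k p q

lemma exists_not_collinear_of_not_collinear_iUnion_segment {E : Type*} [AddCommGroup E]
    [Module ℝ E] {N : ℕ} {v : ℕ → E} (hne : ∀ i, i + 1 < N → v i ≠ v (i + 1))
    (hcol : ¬ Collinear ℝ (⋃ i ∈ Finset.range (N - 1), segment ℝ (v i) (v (i + 1)))) :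
    ∃ i, i + 2 < N ∧ ¬ Collinear ℝ ({v i, v (i + 1), v (i + 2)} : Set E) := by
  by_contra! htriple
  have hline : ∀ k, k < N → v k ∈ line[ℝ, v 0, v 1] := by
    refine Nat.twoStepInduction (fun _ => left_mem_affineSpan_pair ℝ _ _)
      (fun _ => right_mem_affineSpan_pair ℝ _ _) fun k hk hk1 hk2 => ?_
    exact affineSpan_pair_le_of_mem_of_mem (hk (by omega)) (hk1 (by omega))
      ((htriple k hk2).mem_affineSpan_of_mem_of_ne (by simp) (by simp) (by simp)
        (hne k (by omega)))
  refine hcol ((collinear_affineSpan_pair (v 0) (v 1)).subset ?_)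
  simp only [Set.iUnion_subset_iff, Finset.mem_range]
  exact fun i hi => (line[ℝ, v 0, v 1]).convex.segment_subset (hline i (by omega))
    (hline (i + 1) (by omega))

/-- A simple polygon not contained in a straight line has infinite intermediate energy
for `p ≥ 2`. -/
theorem Ip_eq_top_of_isSimplePolygon {n : ℕ} (P : Set (EuclideanSpace ℝ (Fin n)))
    (hP : IsSimplePolygon P) (hcol : ¬ Collinear ℝ P) (p : ℝ) (hp : 2 ≤ p) :
    Ip p P = ⊤ := by
  obtain ⟨N, v, -, hne, rfl, -, -⟩ := hP
  obtain ⟨i, hi, hcorner⟩ := exists_not_collinear_of_not_collinear_iUnion_segment hne hcol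
  have hseg : ∀ j, j + 1 < N →
      segment ℝ (v j) (v (j + 1)) ⊆ ⋃ i ∈ Finset.range (N - 1), segment ℝ (v i) (v (i + 1)) :=
    fun j hj => Set.subset_biUnion_of_mem (u := fun i => segment ℝ (v i) (v (i + 1)))
      (Finset.mem_coe.2 (Finset.mem_range.2 (by omega)))
  refine Ip_eq_top_of_segment_subset hcorner ?_ (hseg (i + 1) (by omega)) hp
  rw [segment_symm]
  exact hseg i (by omega)
end
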